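/- Consider the DAGs G₁: 1 → 3 → 2 and G₂: 2 → 3 → 1 on vertex set {1,2,3}, and the partition Π = {{1,2},{3}}. Then M_{G₁,Π} = { Σ positive definite : σ₁₁σ₃₃ = σ₂₂σ₃₃ − σ₂₃², σ₁₃σ₂₃ − σ₁₂σ₃₃ = 0 }, where Σ = (σ_{ij}). -/

import Mathlib

/-!
Write `Λ` for the edge weights `λ₁₃ = a`, `λ₃₂ = b`. Then `(I - Λ)⁻¹` is unitriangular, so the model
is the image of `(a, b, w, v) ↦ (I - Λ)⁻ᵀ diag(w, w, v) (I - Λ)⁻¹`, whose entries are explicit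
polynomials satisfying both constraints. Conversely, a positive definite `Σ` satisfying them is
recovered from `a = σ₁₃/σ₁₁`, `b = σ₂₃/σ₃₃`, `w = σ₁₁` and the Schur complement
`v = σ₃₃ - σ₁₃²/σ₁₁ > 0`.
-/

open Matrix

/-- The partially homoscedastic linear Gaussian model `M_{G,Π}`. -/
def PHModel {V : Type*} [Fintype V] [DecidableEq V]
    (E : V → V → Prop) (r : V → V → Prop) : Set (Matrix V V ℝ) :=
  {C | ∃ (Λ : Matrix V V ℝ) (ω : V → ℝ),
    (∀ a b, ¬ E a b → Λ a b = 0) ∧ (∀ a, 0 < ω a) ∧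
    (∀ a b, r a b → ω a = ω b) ∧
    C = ((1 - Λ)ᵀ)⁻¹ * Matrix.diagonal ω * (1 - Λ)⁻¹}

namespace Matrix

lemma posDef_transpose_inv_mul_diagonal_mul_inv {n : Type*} [Fintype n] [DecidableEq n]
    {M : Matrix n n ℝ} (hM : IsUnit M) {ω : n → ℝ} (hω : ∀ i, 0 < ω i) :
    ((Mᵀ)⁻¹ * diagonal ω * M⁻¹).PosDef := by
  have h := (PosDef.diagonal hω).conjTranspose_mul_mul_same
    (mulVec_injective_of_isUnit (isUnit_nonsing_inv_iff.mpr hM))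
  rwa [conjTranspose_eq_transpose_of_trivial, transpose_nonsing_inv] at h

lemma PosDef.sq_apply_lt_mul_apply_apply {n : Type*} {A : Matrix n n ℝ} (hA : A.PosDef)
    {i j : n} (hij : i ≠ j) : A i j ^ 2 < A i i * A j j := by
  have hdet := (hA.submatrix (e := ![i, j]) (by
    intro x y h; fin_cases x <;> fin_cases y <;> simp_all [eq_comm])).det_pos
  have hsym : A j i = A i j := hA.isHermitian.apply i j
  rw [det_fin_two] at hdet
  simp only [submatrix_apply, cons_val_zero, cons_val_one, hsym] at hdet
  linarith

lemma PosDef.sub_sq_div_pos {n : Type*} {A : Matrix n n ℝ} (hA : A.PosDef) {i j : n}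
    (hij : i ≠ j) : 0 < A j j - A i j ^ 2 / A i i := by
  rw [sub_pos, div_lt_iff₀ hA.diag_pos, mul_comm]
  exact hA.sq_apply_lt_mul_apply_apply hij

end Matrix

namespace G₁

/- The vertices `1, 2, 3` of the paper are `0, 1, 2 : Fin 3`. -/

def Edge (a b : Fin 3) : Prop := (a = 0 ∧ b = 2) ∨ (a = 2 ∧ b = 1)

def SameBlock (a b : Fin 3) : Prop := a = b ∨ (a = 0 ∧ b = 1) ∨ (a = 1 ∧ b = 0)

def edgeWeights (a b : ℝ) : Matrix (Fin 3) (Fin 3) ℝ := !![0, 0, a; 0, 0, 0; 0, b, 0]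

def cov (a b w v : ℝ) : Matrix (Fin 3) (Fin 3) ℝ :=
  !![w, w * a * b, w * a;
     w * a * b, w * (a * b) ^ 2 + w + v * b ^ 2, (w * a ^ 2 + v) * b;
     w * a, (w * a ^ 2 + v) * b, w * a ^ 2 + v]

lemma eq_edgeWeights {Λ : Matrix (Fin 3) (Fin 3) ℝ} (hΛ : ∀ i j, ¬ Edge i j → Λ i j = 0) :
    Λ = edgeWeights (Λ 0 2) (Λ 2 1) := by
  ext i j
  fin_cases i <;> fin_cases j <;> simp [edgeWeights, hΛ, Edge]

lemma edgeWeights_apply_of_not_edge (a b : ℝ) {i j : Fin 3} (h : ¬ Edge i j) :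
    edgeWeights a b i j = 0 := by
  fin_cases i <;> fin_cases j <;> simp_all [edgeWeights, Edge]

lemma eq_of_sameBlock {ω : Fin 3 → ℝ} (hω : ∀ i j, SameBlock i j → ω i = ω j) :
    ω = ![ω 0, ω 0, ω 2] := by
  ext i
  fin_cases i <;> simp [hω 1 0 (by simp [SameBlock])]

lemma apply_eq_apply_of_sameBlock (w v : ℝ) {i j : Fin 3} (h : SameBlock i j) :
    ![w, w, v] i = ![w, w, v] j := by
  fin_cases i <;> fin_cases j <;> simp_all [SameBlock]

lemma inv_one_sub_edgeWeights (a b : ℝ) :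
    (1 - edgeWeights a b)⁻¹ = !![1, a * b, a; 0, 1, 0; 0, b, 1] := by
  refine inv_eq_right_inv ?_
  ext i j
  fin_cases i <;> fin_cases j <;> simp [edgeWeights, mul_apply, Fin.sum_univ_three, one_apply]

lemma isUnit_one_sub_edgeWeights (a b : ℝ) : IsUnit (1 - edgeWeights a b) := by
  rw [isUnit_iff_isUnit_det, det_fin_three]
  simp [edgeWeights]

lemma transpose_inv_mul_diagonal_mul_inv_eq_cov (a b w v : ℝ) :
    ((1 - edgeWeights a b)ᵀ)⁻¹ * diagonal ![w, w, v] * (1 - edgeWeights a b)⁻¹ =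
      cov a b w v := by
  rw [← transpose_nonsing_inv, inv_one_sub_edgeWeights]
  ext i j
  fin_cases i <;> fin_cases j <;> simp [cov, mul_apply, Fin.sum_univ_three] <;> ring

lemma cov_constraints (a b w v : ℝ) :
    cov a b w v 0 0 * cov a b w v 2 2 =
        cov a b w v 1 1 * cov a b w v 2 2 - cov a b w v 1 2 ^ 2 ∧
      cov a b w v 0 2 * cov a b w v 1 2 - cov a b w v 0 1 * cov a b w v 2 2 = 0 := by
  constructor <;> simp [cov] <;> ring

lemma eq_cov_of_constraints {C : Matrix (Fin 3) (Fin 3) ℝ} (hC : C.PosDef)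
    (hvar : C 0 0 * C 2 2 = C 1 1 * C 2 2 - C 1 2 ^ 2)
    (hci : C 0 2 * C 1 2 - C 0 1 * C 2 2 = 0) :
    C = cov (C 0 2 / C 0 0) (C 1 2 / C 2 2) (C 0 0) (C 2 2 - C 0 2 ^ 2 / C 0 0) := by
  have h00 : C 0 0 ≠ 0 := hC.diag_pos.ne'
  have h22 : C 2 2 ≠ 0 := hC.diag_pos.ne'
  have hsym : ∀ i j, C j i = C i j := hC.isHermitian.apply
  ext i j
  fin_cases i <;> fin_cases j <;> simp [cov] <;> field_simp
  · linear_combination -hci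
  · linear_combination -hci + C 2 2 * hsym 0 1
  · linear_combination -(C 0 0 * C 2 2) * hvar
  · ring
  · linear_combination hsym 0 2
  · linear_combination C 0 0 * C 2 2 * hsym 1 2
  · ring

end G₁

/-- for the DAG `G₁ : 1 → 3 → 2` on vertices `{1,2,3}` (here coded as
`0 → 2 → 1` on `Fin 3`) and the partition `Π = {{1,2},{3}}`, the model `M_{G₁,Π}` is
exactly the set of positive definite `Σ` with `σ₁₁σ₃₃ = σ₂₂σ₃₃ - σ₂₃²` and
`σ₁₃σ₂₃ - σ₁₂σ₃₃ = 0`. -/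
theorem stmt15 :
    PHModel (fun a b : Fin 3 => (a = 0 ∧ b = 2) ∨ (a = 2 ∧ b = 1))
        (fun a b => a = b ∨ (a = 0 ∧ b = 1) ∨ (a = 1 ∧ b = 0)) =
      {C : Matrix (Fin 3) (Fin 3) ℝ | C.PosDef ∧
        C 0 0 * C 2 2 = C 1 1 * C 2 2 - (C 1 2) ^ 2 ∧
        C 0 2 * C 1 2 - C 0 1 * C 2 2 = 0} := by
  change PHModel G₁.Edge G₁.SameBlock = _
  ext C
  constructor
  · rintro ⟨Λ, ω, hΛ, hω, hblock, rfl⟩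
    rw [G₁.eq_edgeWeights hΛ]
    refine ⟨posDef_transpose_inv_mul_diagonal_mul_inv (G₁.isUnit_one_sub_edgeWeights _ _) hω, ?_⟩
    rw [G₁.eq_of_sameBlock hblock, G₁.transpose_inv_mul_diagonal_mul_inv_eq_cov]
    exact G₁.cov_constraints _ _ _ _
  · rintro ⟨hC, hvar, hci⟩
    have hv : 0 < C 2 2 - C 0 2 ^ 2 / C 0 0 := hC.sub_sq_div_pos (by decide)
    refine ⟨G₁.edgeWeights (C 0 2 / C 0 0) (C 1 2 / C 2 2),
      ![C 0 0, C 0 0, C 2 2 - C 0 2 ^ 2 / C 0 0],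
      fun _ _ => G₁.edgeWeights_apply_of_not_edge _ _, fun i => ?_,
      fun _ _ => G₁.apply_eq_apply_of_sameBlock _ _, ?_⟩
    · fin_cases i <;> simp [hC.diag_pos, hv]
    · rw [G₁.transpose_inv_mul_diagonal_mul_inv_eq_cov]
      exact G₁.eq_cov_of_constraints hC hvar hci
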